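/- In every trace of the guest-message counter system, the nonces of all logged encryption events are pairwise distinct; i.e., the honest guest and firmware never encrypt two messages under the same nonce (no key–nonce reuse, the paper's lemma FreshNoKeyNonceReuse / SupNoKeyRevealFromNonceReuse for honest agents). -/

import Mathlib

/-- The two honest agents exchanging guest messages: the SNP-protected guest
and the AMD-SP firmware. -/
inductive Agent : Type
  | Guest
  | FW
deriving DecidableEq

/-- The phase of the guest: idle, or waiting for a firmware response. -/
inductive Phase : Type
  | Idle
  | Waiting
deriving DecidableEq

/-- A state of the guest-message counter system: the guest's message counter,
the firmware's message counter, and the phase. The initial state is `⟨0, 0, Idle⟩`. -/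
structure St : Type where
  gc : ℕ
  fc : ℕ
  ph : Phase

/-- An encryption event: the logging agent, the nonce (message counter) used,
and the payload of type `M`. -/
abbrev EncEvent (M : Type) : Type := Agent × ℕ × M

/-- `Reach M s evs` holds iff, starting from the initial state `(0, 0, Idle)`,
the guest-message counter system can reach the state `s` having logged exactly
the list of encryption events `evs`, in order.  The transitions are:
`send` (the guest encrypts a request under nonce `gc`), `serve` (the firmware,
whose counter equals the guest's, encrypts a response under nonce `fc + 1` and
advances its counter by two), and `recv` (the guest, whose counter is two behind
the firmware's, receives the response and advances its counter by two). -/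
inductive Reach (M : Type) : St → List (EncEvent M) → Prop
  | init : Reach M ⟨0, 0, Phase.Idle⟩ []
  | send {gc fc : ℕ} {evs : List (EncEvent M)} (m : M) :
      Reach M ⟨gc, fc, Phase.Idle⟩ evs →
      Reach M ⟨gc, fc, Phase.Waiting⟩ (evs ++ [(Agent.Guest, gc, m)])
  | serve {gc fc : ℕ} {evs : List (EncEvent M)} (m : M) :
      Reach M ⟨gc, fc, Phase.Waiting⟩ evs → fc = gc →
      Reach M ⟨gc, fc + 2, Phase.Waiting⟩ (evs ++ [(Agent.FW, fc + 1, m)])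
  | recv {gc fc : ℕ} {evs : List (EncEvent M)} :
      Reach M ⟨gc, fc, Phase.Waiting⟩ evs → fc = gc + 2 →
      Reach M ⟨gc + 2, fc, Phase.Idle⟩ evs

def nonceBound (s : St) : ℕ :=
  match s.ph with
  | Phase.Idle => s.gc
  | Phase.Waiting => if s.fc = s.gc then s.gc + 1 else s.gc + 2

theorem nonce_invariant (M : Type) (s : St)
    (evs : List (EncEvent M)) (h : Reach M s evs) :
    (evs.map (fun e => e.2.1)).Nodup ∧
      ∀ n ∈ evs.map (fun e => e.2.1), n < nonceBound s := by
  induction h with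
  | init => simp [nonceBound]
  | @send gc fc evs m _ ih =>
      obtain ⟨hnd, hb⟩ := ih
      simp only [nonceBound] at hb ⊢
      simp only [List.map_append, List.map_cons, List.map_nil]
      refine ⟨?_, ?_⟩
      · rw [List.nodup_append]
        refine ⟨hnd, List.nodup_singleton _, ?_⟩
        intro a ha b hb' hab
        simp only [List.mem_singleton] at hb'
        subst hb'
        exact absurd (hb _ ha) (by omega)
      · intro n hn
        simp only [List.mem_append, List.mem_singleton] at hn
        split <;> rcases hn with hn | hn <;> first
          | (exact lt_trans (hb n hn) (Nat.lt_succ_self _))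
          | (subst hn; omega)
          | (exact lt_trans (hb n hn) (by omega))
  | @serve gc fc evs m _ hfc ih =>
      obtain ⟨hnd, hb⟩ := ih
      simp only [nonceBound, if_pos hfc] at hb
      have hne : fc + 2 ≠ gc := by omega
      simp only [nonceBound, if_neg hne]
      simp only [List.map_append, List.map_cons, List.map_nil]
      refine ⟨?_, ?_⟩
      · rw [List.nodup_append]
        refine ⟨hnd, List.nodup_singleton _, ?_⟩
        intro a ha b hb' hab
        simp only [List.mem_singleton] at hb'
        subst hb'
        have := hb _ ha
        omega
      · intro n hn
        simp only [List.mem_append, List.mem_singleton] at hn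
        rcases hn with hn | hn
        · have := hb n hn; omega
        · omega
  | @recv gc fc evs _ hfc ih =>
      obtain ⟨hnd, hb⟩ := ih
      have hne : fc ≠ gc := by omega
      simp only [nonceBound, if_neg hne] at hb
      refine ⟨hnd, fun n hn => ?_⟩
      have := hb n hn
      simp only [nonceBound]
      omega

/-- FreshNoKeyNonceReuse / SupNoKeyRevealFromNonceReuse (honest agents): in every
trace of the guest-message counter system, the nonces of all logged encryption
events are pairwise distinct; i.e., the honest guest and firmware never encrypt
two messages under the same nonce. -/
theorem FreshNoKeyNonceReuse (M : Type) (s : St)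
    (evs : List (EncEvent M)) (h : Reach M s evs) :
    (evs.map (fun e => e.2.1)).Nodup := by
  exact (nonce_invariant M s evs h).1
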